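/- Suppose 0 < α ≤ 1 and F ⊂ ℝ^p is compact. If {f₁, f₂, …} is a countable dense subset of C₁^α(F), then there is a dense Gδ subset 𝒢 of C₁^α(F) such that sup_{f ∈ 𝒢} D_*^f(F) ≤ sup_{k ∈ ℕ} D_*^{f_k}(F). -/

import Mathlib

/-!
Fix a rational `q > sup_k D_*^{f_k}(F)`. Almost every level set of `f_k` has `q`-Hausdorff
measure zero, hence a countable open cover with `∑ diam ^ q ≤ ε`; by compactness of `F` the same
cover works for the level sets of every `g` uniformly close to `f_k` at nearby levels. By
continuity from above of Lebesgue measure, for `g` close enough to `f_k` the levels without such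
a cover have measure `< η`. Taking interiors, `ε = 1/m` and `η = 1/n` gives countably many open
sets containing every `f_k`; their intersection is a dense `G_δ` by Baire, and for its members
almost every level set has `q`-Hausdorff measure zero for every such `q`.
-/

open MeasureTheory

noncomputable section

/-- `C₁^α(F)`: the set of 1-Hölder-α functions `F → ℝ`, as a subset of the bounded
continuous functions on `F` (which carry the supremum metric). -/
def HolderBall (α : ℝ) {p : ℕ} (F : Set (EuclideanSpace ℝ (Fin p))) :
    Set (BoundedContinuousFunction ↥F ℝ) :=
  {f | ∀ x y : ↥F,
    |f x - f y| ≤ dist (x : EuclideanSpace ℝ (Fin p)) (y : EuclideanSpace ℝ (Fin p)) ^ α}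

/-- `D_*^f(F) = sup {d : λ{r : dim_H (f⁻¹(r)) ≥ d} > 0}`. -/
def DstarF {p : ℕ} (F : Set (EuclideanSpace ℝ (Fin p))) (f : ↥F → ℝ) : ℝ :=
  sSup {d : ℝ | 0 < volume {r : ℝ | ENNReal.ofReal d ≤ dimH (Subtype.val '' (f ⁻¹' {r}))}}

open Set Metric Filter Topology
open scoped ENNReal NNReal BoundedContinuousFunction

section HasSmallCover

variable {X : Type*} [EMetricSpace X] {A B : Set X} {q : ℝ} {ε ε' : ℝ≥0∞}

def HasSmallCover (A : Set X) (q : ℝ) (ε : ℝ≥0∞) : Prop :=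
  ∃ t : ℕ → Set X, A ⊆ ⋃ n, t n ∧ ∑' n, ediam (t n) ^ q ≤ ε

theorem HasSmallCover.mono (h : HasSmallCover B q ε) (hAB : A ⊆ B) (hε : ε ≤ ε') :
    HasSmallCover A q ε' := by
  obtain ⟨t, hBt, ht⟩ := h
  exact ⟨t, hAB.trans hBt, ht.trans hε⟩

theorem hasSmallCover_empty (hq : 0 < q) (ε : ℝ≥0∞) : HasSmallCover (∅ : Set X) q ε :=
  ⟨fun _ => ∅, empty_subset _, by simp [ENNReal.zero_rpow_of_pos hq]⟩

theorem exists_isOpen_superset_ediam_rpow_le (hq : 0 < q) (hA : ediam A ≠ ∞) {η : ℝ≥0∞}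
    (hη : η ≠ 0) : ∃ U, IsOpen U ∧ A ⊆ U ∧ ediam U ^ q ≤ ediam A ^ q + η := by
  have hcont : Continuous fun δ : ℝ≥0 => (ediam A + 2 * (δ : ℝ≥0∞)) ^ q :=
    (ENNReal.continuous_rpow_const).comp
      (continuous_const.add ((ENNReal.continuous_const_mul ENNReal.ofNat_ne_top).comp
        ENNReal.continuous_coe))
  have hlt : (ediam A + 2 * ((0 : ℝ≥0) : ℝ≥0∞)) ^ q < ediam A ^ q + η := by
    simpa using ENNReal.lt_add_right (ENNReal.rpow_ne_top_of_nonneg hq.le hA) hη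
  obtain ⟨δ, hδ, hδpos⟩ := (((hcont.tendsto 0).eventually (gt_mem_nhds hlt)).filter_mono
    nhdsWithin_le_nhds |>.and (self_mem_nhdsWithin (s := Ioi 0))).exists
  refine ⟨thickening δ A, isOpen_thickening, self_subset_thickening hδpos A, ?_⟩
  calc ediam (thickening δ A) ^ q ≤ (ediam A + 2 * (δ : ℝ≥0∞)) ^ q :=
        ENNReal.rpow_le_rpow (ediam_thickening_le δ) hq.le
    _ ≤ ediam A ^ q + η := hδ.le

variable [MeasurableSpace X] [BorelSpace X]

theorem hausdorffMeasure_eq_zero_of_forall_hasSmallCover (hq : 0 < q)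
    (h : ∀ ε ≠ 0, HasSmallCover A q ε) : μH[q] A = 0 := by
  refine le_antisymm (ENNReal.le_of_forall_pos_le_add fun ε hε _ => ?_) zero_le
  rw [zero_add, Measure.hausdorffMeasure_apply]
  refine iSup₂_le fun r hr => ?_
  have hrq : r ^ q ≠ 0 := (ENNReal.rpow_pos_of_nonneg hr hq.le).ne'
  obtain ⟨t, hAt, ht⟩ := h (min (ε : ℝ≥0∞) (r ^ q)) (by simp [hε.ne', hrq])
  have hdiam : ∀ n, ediam (t n) ^ q ≤ min (ε : ℝ≥0∞) (r ^ q) := fun n =>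
    (ENNReal.le_tsum n).trans ht
  refine iInf₂_le_of_le t hAt <| iInf_le_of_le
    (fun n => (ENNReal.rpow_le_rpow_iff hq).1 ((hdiam n).trans (min_le_right _ _))) ?_
  calc ∑' n, ⨆ _ : (t n).Nonempty, ediam (t n) ^ q ≤ ∑' n, ediam (t n) ^ q :=
        ENNReal.tsum_le_tsum fun n => iSup_le fun _ => le_rfl
    _ ≤ ε := ht.trans (min_le_left _ _)

theorem dimH_le_of_forall_hasSmallCover (hq : 0 < q)
    (h : ∀ n : ℕ, HasSmallCover A q (n : ℝ≥0∞)⁻¹) : dimH A ≤ ENNReal.ofReal q := by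
  have hμ : μH[q] A = 0 := hausdorffMeasure_eq_zero_of_forall_hasSmallCover hq fun ε hε => by
    obtain ⟨n, hn⟩ := ENNReal.exists_inv_nat_lt hε
    exact (h n).mono subset_rfl hn.le
  refine dimH_le_of_hausdorffMeasure_ne_top (d := q.toNNReal) ?_
  simp [Real.coe_toNNReal q hq.le, hμ]

theorem exists_cover_tsum_ediam_rpow_lt (hq : 0 < q) (hA : μH[q] A = 0) (hε : ε ≠ 0) :
    ∃ t : ℕ → Set X, A ⊆ ⋃ n, t n ∧ ∑' n, ediam (t n) ^ q < ε := by
  have hinf : (⨅ (t : ℕ → Set X) (_ : A ⊆ ⋃ n, t n) (_ : ∀ n, ediam (t n) ≤ ⊤),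
      ∑' n, ⨆ _ : (t n).Nonempty, ediam (t n) ^ q) < ε := by
    refine lt_of_le_of_lt ?_ (pos_iff_ne_zero.2 hε)
    rw [← hA, Measure.hausdorffMeasure_apply]
    exact le_iSup₂_of_le (f := fun r (_ : 0 < r) => _) ⊤ ENNReal.zero_lt_top le_rfl
  simp only [iInf_lt_iff] at hinf
  obtain ⟨t, hAt, -, ht⟩ := hinf
  refine ⟨t, hAt, lt_of_eq_of_lt (tsum_congr fun n => ?_) ht⟩
  rcases (t n).eq_empty_or_nonempty with h | h
  · simp [h, ENNReal.zero_rpow_of_pos hq]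
  · simp [h]

theorem exists_isOpen_superset_hasSmallCover (hq : 0 < q) (hA : μH[q] A = 0) (hε : ε ≠ 0) :
    ∃ U, IsOpen U ∧ A ⊆ U ∧ HasSmallCover U q ε := by
  have hε2 : ε / 2 ≠ 0 := ENNReal.div_ne_zero.2 ⟨hε, ENNReal.ofNat_ne_top⟩
  obtain ⟨t, hAt, ht⟩ := exists_cover_tsum_ediam_rpow_lt hq hA hε2
  obtain ⟨η, hηpos, hη⟩ := ENNReal.exists_pos_sum_of_countable hε2 ℕ
  have hfin : ∀ n, ediam (t n) ≠ ∞ := fun n h => by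
    have := (ENNReal.le_tsum n).trans_lt (ht.trans_le le_top)
    simp [h, ENNReal.top_rpow_of_pos hq] at this
  choose U hUo htU hU using fun n =>
    exists_isOpen_superset_ediam_rpow_le hq (hfin n) (ENNReal.coe_ne_zero.2 (hηpos n).ne')
  refine ⟨⋃ n, U n, isOpen_iUnion hUo, hAt.trans (iUnion_mono htU), U, subset_rfl, ?_⟩
  calc ∑' n, ediam (U n) ^ q ≤ ∑' n, (ediam (t n) ^ q + η n) := ENNReal.tsum_le_tsum hU
    _ = ∑' n, ediam (t n) ^ q + ∑' n, (η n : ℝ≥0∞) := ENNReal.tsum_add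
    _ ≤ ε / 2 + ε / 2 := add_le_add ht.le hη.le
    _ = ε := ENNReal.add_halves ε

end HasSmallCover

theorem eventually_measure_setOf_not_lt {Y α : Type*} [PseudoMetricSpace Y]
    [PseudoMetricSpace α] [MeasurableSpace α] [OpensMeasurableSpace α] {μ : Measure α}
    {P : Y → α → Prop} {y : Y} {N K : Set α} (hN : μ N = 0) (hP : ∀ r ∉ N, ∀ᶠ z in 𝓝 (y, r), P z.1 z.2)
    (hKm : MeasurableSet K) (hKμ : μ K ≠ ∞) (hK : ∀ᶠ g in 𝓝 y, {r | ¬ P g r} ⊆ K)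
    {η : ℝ≥0∞} (hη : η ≠ 0) : ∀ᶠ g in 𝓝 y, μ {r | ¬ P g r} < η := by
  -- `B n`: the points of `K` within `1 / (n + 1)` of a bad level of some `g` within
  -- `1 / (n + 1)` of `y`. These open sets decrease into `N`; continuity from above concludes.
  set B : ℕ → Set α := fun n =>
    K ∩ ⋃ g ∈ ball y (1 / (n + 1)), ⋃ r ∈ {r | ¬ P g r}, ball r (1 / (n + 1))
  have hBm : ∀ n, MeasurableSet (B n) := fun n =>
    hKm.inter (isOpen_biUnion fun _ _ => isOpen_biUnion fun _ _ => isOpen_ball).measurableSet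
  have hBanti : Antitone B := fun m n hmn => by
    have h : (1 : ℝ) / (n + 1) ≤ 1 / (m + 1) := Nat.one_div_le_one_div hmn
    exact inter_subset_inter_right _
      (biUnion_mono (ball_subset_ball h) fun _ _ => biUnion_mono subset_rfl fun _ _ =>
        ball_subset_ball h)
  have hBN : ⋂ n, B n ⊆ N := fun r hr => by
    by_contra hrN
    obtain ⟨ρ, hρ, hPρ⟩ := Metric.eventually_nhds_iff.1 (hP r hrN)
    obtain ⟨n, hn⟩ := exists_nat_one_div_lt hρ
    obtain ⟨-, hrB⟩ := mem_iInter.1 hr n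
    simp only [mem_iUnion] at hrB
    obtain ⟨g, hg, r', hr', hrr'⟩ := hrB
    refine hr' (hPρ (y := (g, r')) ?_)
    rw [Prod.dist_eq]
    exact max_lt ((mem_ball.1 hg).trans hn) ((mem_ball'.1 hrr').trans hn)
  have hinf : ⨅ n, μ (B n) < η := by
    rw [← hBanti.measure_iInter (fun n => (hBm n).nullMeasurableSet)
      ⟨0, ne_top_of_le_ne_top hKμ (measure_mono inter_subset_left)⟩]
    exact (measure_mono_null hBN hN).trans_lt (pos_iff_ne_zero.2 hη)
  obtain ⟨n, hn⟩ := iInf_lt_iff.1 hinf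
  have hn0 : (0 : ℝ) < 1 / (n + 1) := Nat.one_div_pos_of_nat
  filter_upwards [hK, ball_mem_nhds y hn0] with g hgK hg
  refine lt_of_le_of_lt (measure_mono fun r hr => ?_) hn
  exact ⟨hgK hr, mem_iUnion₂.2 ⟨g, hg, mem_iUnion₂.2 ⟨r, hr, mem_ball_self hn0⟩⟩⟩

section LevelSet

variable {X : Type*}

def levelSet [TopologicalSpace X] (F : Set X) (f : F → ℝ) (r : ℝ) : Set X :=
  Subtype.val '' (f ⁻¹' {r})

theorem eventually_levelSet_subset [TopologicalSpace X] {F : Set X} (hF : IsCompact F)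
    {f : F →ᵇ ℝ} {r : ℝ} {U : Set X} (hU : IsOpen U) (hfU : levelSet F f r ⊆ U) :
    ∀ᶠ z : (F →ᵇ ℝ) × ℝ in 𝓝 (f, r), levelSet F z.1 z.2 ⊆ U := by
  have : CompactSpace F := isCompact_iff_compactSpace.mp hF
  have hs : IsCompact (Subtype.val ⁻¹' U : Set F)ᶜ :=
    (hU.preimage continuous_subtype_val).isClosed_compl.isCompact
  have hpos : ∀ x ∈ (Subtype.val ⁻¹' U : Set F)ᶜ, 0 < |f x - r| := fun x hx =>
    abs_pos.2 (sub_ne_zero.2 fun hfx => hx (hfU ⟨x, hfx, rfl⟩))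
  obtain ⟨ρ, hρ, hρs⟩ :=
    hs.exists_forall_le' ((f.continuous.sub continuous_const).abs.continuousOn) hpos
  refine Metric.eventually_nhds_iff.2 ⟨ρ / 2, half_pos hρ, fun z hz => ?_⟩
  rw [Prod.dist_eq, max_lt_iff] at hz
  rintro _ ⟨x, hx, rfl⟩
  by_contra hxU
  have hfg : |f x - z.1 x| ≤ dist z.1 f := by
    rw [← Real.dist_eq, dist_comm]; exact z.1.dist_coe_le_dist x
  have : |f x - r| < ρ := calc
    |f x - r| ≤ |f x - z.1 x| + |z.2 - r| := by
      rw [show z.2 = z.1 x from hx.symm]; exact abs_sub_le _ _ _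
    _ < ρ / 2 + ρ / 2 := add_lt_add_of_le_of_lt (hfg.trans hz.1.le) hz.2
    _ = ρ := add_halves ρ
  exact (hρs x hxU).not_gt this

variable [EMetricSpace X]

theorem hasSmallCover_levelSet_of_notMem_range {F : Set X} {g : F → ℝ} {r : ℝ}
    (hr : r ∉ range g) {q : ℝ} (hq : 0 < q) (ε : ℝ≥0∞) :
    HasSmallCover (levelSet F g r) q ε := by
  refine (hasSmallCover_empty hq ε).mono ?_ le_rfl
  rintro _ ⟨x, hx, rfl⟩
  exact hr ⟨x, hx⟩

variable [MeasurableSpace X] [BorelSpace X]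

theorem eventually_volume_setOf_not_hasSmallCover_lt {F : Set X} (hF : IsCompact F)
    {f : F →ᵇ ℝ} {q : ℝ} (hq : 0 < q)
    (hf : volume {r | ENNReal.ofReal q ≤ dimH (levelSet F f r)} = 0) {ε η : ℝ≥0∞}
    (hε : ε ≠ 0) (hη : η ≠ 0) :
    ∀ᶠ g : F →ᵇ ℝ in 𝓝 f, volume {r | ¬ HasSmallCover (levelSet F g r) q ε} < η := by
  refine eventually_measure_setOf_not_lt
    (P := fun (g : F →ᵇ ℝ) r => HasSmallCover (levelSet F g r) q ε)
    (K := closedBall 0 (‖f‖ + 1)) hf (fun r hr => ?_) measurableSet_closedBall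
    measure_closedBall_lt_top.ne ?_ hη
  · have hμ : μH[q] (levelSet F f r) = 0 := by
      simpa [Real.coe_toNNReal q hq.le] using
        hausdorffMeasure_of_dimH_lt (d := q.toNNReal) (lt_of_not_ge hr)
    obtain ⟨U, hU, hfU, hUε⟩ := exists_isOpen_superset_hasSmallCover hq hμ hε
    exact (eventually_levelSet_subset hF hU hfU).mono fun z hz => hUε.mono hz le_rfl
  · filter_upwards [ball_mem_nhds f one_pos] with g hg r hr
    obtain ⟨x, rfl⟩ : r ∈ range g := by
      by_contra h
      exact hr (hasSmallCover_levelSet_of_notMem_range h hq ε)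
    rw [mem_closedBall_zero_iff]
    calc ‖g x‖ ≤ ‖g‖ := g.norm_coe_le_norm x
      _ ≤ ‖f‖ + ‖g - f‖ := norm_le_norm_add_norm_sub' g f
      _ ≤ ‖f‖ + 1 := by rw [← dist_eq_norm]; linarith [mem_ball.1 hg]

end LevelSet

section DstarF

variable {p : ℕ} (F : Set (EuclideanSpace ℝ (Fin p))) (f : F → ℝ)

theorem volume_setOf_le_dimH_levelSet_eq_zero_of_lt {d : ℝ} (hd : p < d) :
    volume {r | ENNReal.ofReal d ≤ dimH (levelSet F f r)} = 0 := by
  convert measure_empty (μ := (volume : Measure ℝ))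
  refine eq_empty_of_forall_notMem fun r hr => ?_
  have hdim : dimH (levelSet F f r) ≤ p := calc
    dimH (levelSet F f r) ≤ dimH (univ : Set (EuclideanSpace ℝ (Fin p))) :=
      dimH_mono (subset_univ _)
    _ = p := by rw [Real.dimH_univ_eq_finrank, finrank_euclideanSpace_fin]
  exact (ENNReal.natCast_lt_ofReal.2 hd).not_ge (hr.trans hdim)

def dstarSet : Set ℝ := {d | 0 < volume {r | ENNReal.ofReal d ≤ dimH (levelSet F f r)}}

theorem bddAbove_dstarSet : BddAbove (dstarSet F f) :=
  ⟨p, fun _ hd => le_of_not_gt fun h => hd.ne' (volume_setOf_le_dimH_levelSet_eq_zero_of_lt F f h)⟩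

theorem zero_mem_dstarSet : 0 ∈ dstarSet F f := by
  simp [dstarSet]

theorem DstarF_nonneg : 0 ≤ DstarF F f :=
  le_csSup (bddAbove_dstarSet F f) (zero_mem_dstarSet F f)

theorem DstarF_le_of_forall_volume_eq_zero {c : ℝ}
    (h : ∀ d, c < d → volume {r | ENNReal.ofReal d ≤ dimH (levelSet F f r)} = 0) :
    DstarF F f ≤ c :=
  csSup_le ⟨0, zero_mem_dstarSet F f⟩ fun d hd =>
    le_of_not_gt fun hcd => hd.ne' (h d hcd)

theorem DstarF_le : DstarF F f ≤ p :=
  DstarF_le_of_forall_volume_eq_zero F f fun _ =>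
    volume_setOf_le_dimH_levelSet_eq_zero_of_lt F f

theorem volume_setOf_le_dimH_levelSet_eq_zero_of_DstarF_lt {d : ℝ} (hd : DstarF F f < d) :
    volume {r | ENNReal.ofReal d ≤ dimH (levelSet F f r)} = 0 := by
  by_contra hne
  exact hd.not_ge (le_csSup (bddAbove_dstarSet F f) (pos_iff_ne_zero.2 hne))

end DstarF

theorem isClosed_holderBall {p : ℕ} (α : ℝ) (F : Set (EuclideanSpace ℝ (Fin p))) :
    IsClosed (HolderBall α F) := by
  simp only [HolderBall, ofPred_forall]
  exact isClosed_iInter fun x => isClosed_iInter fun y =>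
    isClosed_le (by fun_prop) continuous_const

theorem stmt18_general {p : ℕ} (F : Set (EuclideanSpace ℝ (Fin p))) (hFc : IsCompact F)
    (α : ℝ) (f : ℕ → ↥(HolderBall α F)) (hdense : Dense (Set.range f)) :
    ∃ G : Set ↥(HolderBall α F), Dense G ∧ IsGδ G ∧
      ∀ g ∈ G, DstarF F ⇑((g : ↥(HolderBall α F)) : BoundedContinuousFunction ↥F ℝ) ≤
        ⨆ k : ℕ, DstarF F ⇑((f k : ↥(HolderBall α F)) : BoundedContinuousFunction ↥F ℝ) := by
  have : CompleteSpace (HolderBall α F) := (isClosed_holderBall α F).completeSpace_coe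
  set S := ⨆ k : ℕ, DstarF F ⇑((f k : ↥(HolderBall α F)) : BoundedContinuousFunction ↥F ℝ)
  have hfS : ∀ k, DstarF F (f k : F →ᵇ ℝ) ≤ S :=
    le_ciSup ⟨p, by rintro _ ⟨k, rfl⟩; exact DstarF_le F _⟩
  have hS : 0 ≤ S := (DstarF_nonneg F _).trans (hfS 0)
  let V : {q : ℚ // S < q} × ℕ × ℕ → Set (HolderBall α F) := fun i =>
    Subtype.val ⁻¹' interior {g : F →ᵇ ℝ |
      volume {r | ¬ HasSmallCover (levelSet F g r) i.1 (i.2.1 : ℝ≥0∞)⁻¹} < (i.2.2 : ℝ≥0∞)⁻¹}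
  have hVo : ∀ i, IsOpen (V i) := fun i => isOpen_interior.preimage continuous_subtype_val
  have hfV : ∀ i k, f k ∈ V i := fun ⟨q, _, _⟩ k => mem_interior_iff_mem_nhds.2 <|
    eventually_volume_setOf_not_hasSmallCover_lt hFc (hS.trans_lt q.2)
      (volume_setOf_le_dimH_levelSet_eq_zero_of_DstarF_lt F _ ((hfS k).trans_lt q.2))
      (by simp) (by simp)
  refine ⟨⋂ i, V i,
    dense_iInter_of_isOpen hVo fun i => hdense.mono (range_subset_iff.2 (hfV i)),
    IsGδ.iInter_of_isOpen hVo,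
    fun g hg => DstarF_le_of_forall_volume_eq_zero F _ fun d hd => ?_⟩
  obtain ⟨q, hSq, hqd⟩ := exists_rat_btwn hd
  have hq : (0 : ℝ) < q := hS.trans_lt hSq
  have hnull : ∀ m : ℕ,
      volume {r | ¬ HasSmallCover (levelSet F (g : F →ᵇ ℝ) r) q (m : ℝ≥0∞)⁻¹} = 0 := by
    intro m
    by_contra hne
    obtain ⟨n, hn⟩ := ENNReal.exists_inv_nat_lt hne
    have hgV : g ∈ V ⟨⟨q, hSq⟩, m, n⟩ := mem_iInter.1 hg _
    exact hn.not_gt (interior_subset hgV :)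
  refine measure_mono_null (fun r hr => ?_) (measure_iUnion_null hnull)
  by_contra hbad
  simp only [mem_iUnion, mem_ofPred_eq, not_exists, not_not] at hbad
  exact ((ENNReal.ofReal_lt_ofReal_iff (hq.trans hqd)).2 hqd).not_ge
    (hr.trans (dimH_le_of_forall_hasSmallCover hq hbad))

/-- Let `0 < α ≤ 1` and let `F ⊆ ℝ^p` be compact. If
`f₁, f₂, …` is a countable dense subset of `C₁^α(F)`, then there is a dense Gδ
subset `𝒢` of `C₁^α(F)` such that `sup_{g ∈ 𝒢} D_*^g(F) ≤ sup_k D_*^{f_k}(F)`. -/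
theorem stmt18 {p : ℕ} (F : Set (EuclideanSpace ℝ (Fin p))) (hFc : IsCompact F)
    (α : ℝ) (hα0 : 0 < α) (hα1 : α ≤ 1)
    (f : ℕ → ↥(HolderBall α F)) (hdense : Dense (Set.range f)) :
    ∃ G : Set ↥(HolderBall α F), Dense G ∧ IsGδ G ∧
      ∀ g ∈ G, DstarF F ⇑((g : ↥(HolderBall α F)) : BoundedContinuousFunction ↥F ℝ) ≤
        ⨆ k : ℕ, DstarF F ⇑((f k : ↥(HolderBall α F)) : BoundedContinuousFunction ↥F ℝ) :=
  stmt18_general F hFc α f hdense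

end
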